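/- arXiv:2205.13608 — 4 statements merged into one kernel-verified Lean document; each statement's English description precedes it below -/
import Mathlib

section
/- Let S be a finite nonempty index set and let p_s > 0 and q_s > 0 for every s ∈ S. If ∑_{s∈S} p_s · log(q_s) > ∑_{s∈S} p_s · log(p_s), then ∑_{s∈S} q_s > ∑_{s∈S} p_s. -/
/-- Strictly increasing the Baum–Welch reestimation function strictly increases
the likelihood: if `∑ p s * log (q s) > ∑ p s * log (p s)` then `∑ q s > ∑ p s`. -/
theorem stmt_3 {S : Type*} [Fintype S] [Nonempty S] (p q : S → ℝ)
    (hp : ∀ s, 0 < p s) (hq : ∀ s, 0 < q s)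
    (h : ∑ s, p s * Real.log (p s) < ∑ s, p s * Real.log (q s)) :
    ∑ s, p s < ∑ s, q s := by
  have key : ∀ s, p s * Real.log (q s) - p s * Real.log (p s) ≤ q s - p s := by
    intro s
    have hlog : Real.log (q s / p s) ≤ q s / p s - 1 :=
      Real.log_le_sub_one_of_pos (div_pos (hq s) (hp s))
    have := mul_le_mul_of_nonneg_left hlog (hp s).le
    rw [Real.log_div (hq s).ne' (hp s).ne'] at this
    calc p s * Real.log (q s) - p s * Real.log (p s)
        = p s * (Real.log (q s) - Real.log (p s)) := by ring
      _ ≤ p s * (q s / p s - 1) := this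
      _ = q s - p s := by rw [mul_sub, mul_one, mul_div_cancel₀ _ (hp s).ne']
  have hsum : ∑ s, (p s * Real.log (q s) - p s * Real.log (p s)) ≤ ∑ s, (q s - p s) :=
    Finset.sum_le_sum fun s _ => key s
  rw [Finset.sum_sub_distrib, Finset.sum_sub_distrib] at hsum
  linarith
end

section
/- Let O_1, …, O_T : [0,1] → ℝ be continuously differentiable functions, let w_1, …, w_T be nonnegative reals with ∑_{t=1}^T w_t > 0, and fix h > 0. Then the function k ↦ ∑_{t=1}^T w_t ∫_0^1 (O_t'(τ) − h(k − O_t(τ)))² dτ on ℝ has a unique global minimizer, namely k* = (∑_{t=1}^T w_t [ (O_t(1) − O_t(0)) + h ∫_0^1 O_t(τ) dτ ]) / (h ∑_{t=1}^T w_t). -/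
/-!
With `u t := O t' + h O t`, each integrand is `(u t τ - h k)²`, so the objective is the
quadratic `h² (∑ w) k² - 2 h k ∑ w t ∫ u t + const` with positive leading coefficient.
Its vertex is the unique minimizer, and `∫₀¹ u t = (O t 1 - O t 0) + h ∫₀¹ O t` by the
fundamental theorem of calculus.
-/

open MeasureTheory (volume)
open intervalIntegral

theorem quadratic_vertex_isMinimizer {a b c : ℝ} (ha : 0 < a) :
    let q : ℝ → ℝ := fun k => a * k ^ 2 - 2 * b * k + c
    (∀ k, q (b / a) ≤ q k) ∧ (∀ k, q k = q (b / a) ↔ k = b / a) := by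
  intro q
  have hq : ∀ k, q k = q (b / a) + a * (k - b / a) ^ 2 := fun k => by
    simp only [q]
    field_simp
    ring
  refine ⟨fun k => ?_, fun k => ?_⟩
  · rw [hq k]
    have : 0 ≤ a * (k - b / a) ^ 2 := by positivity
    linarith
  · rw [hq k, add_eq_left, mul_eq_zero, pow_eq_zero_iff two_ne_zero, sub_eq_zero]
    simp [ha.ne']

theorem integral_sub_const_sq {u : ℝ → ℝ} {a b : ℝ} (hu : IntervalIntegrable u volume a b)
    (hu2 : IntervalIntegrable (fun τ => u τ ^ 2) volume a b) (c : ℝ) :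
    ∫ τ in a..b, (u τ - c) ^ 2 =
      (∫ τ in a..b, u τ ^ 2) - 2 * c * (∫ τ in a..b, u τ) + c ^ 2 * (b - a) := by
  have hexpand : (fun τ => (u τ - c) ^ 2) = fun τ => (u τ ^ 2 - 2 * c * u τ) + c ^ 2 := by
    funext τ; ring
  rw [hexpand, integral_add (hu2.sub (hu.const_mul _)) intervalIntegrable_const,
    integral_sub hu2 (hu.const_mul _), integral_const_mul, integral_const, smul_eq_mul]
  ring

theorem integral_deriv_add_const_mul {f : ℝ → ℝ} (hf : ContDiff ℝ 1 f) (h a b : ℝ) :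
    ∫ τ in a..b, (deriv f τ + h * f τ) = (f b - f a) + h * ∫ τ in a..b, f τ := by
  have hf' : IntervalIntegrable (deriv f) volume a b :=
    (hf.continuous_deriv le_rfl).intervalIntegrable _ _
  rw [integral_add hf' ((hf.continuous.const_mul h).intervalIntegrable _ _), integral_const_mul,
    integral_deriv_eq_sub (fun x _ => hf.differentiable one_ne_zero x) hf']

theorem weighted_objective_eq_quadratic {ι : Type*} [Fintype ι] (O : ι → ℝ → ℝ)
    (hO : ∀ t, ContDiff ℝ 1 (O t)) (w : ι → ℝ) (h k : ℝ) :
    ∑ t, w t * ∫ τ in (0:ℝ)..1, (deriv (O t) τ - h * (k - O t τ)) ^ 2 =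
      (h ^ 2 * ∑ t, w t) * k ^ 2
        - 2 * (h * ∑ t, w t * ((O t 1 - O t 0) + h * ∫ τ in (0:ℝ)..1, O t τ)) * k
        + ∑ t, w t * ∫ τ in (0:ℝ)..1, (deriv (O t) τ + h * O t τ) ^ 2 := by
  have hterm : ∀ t, ∫ τ in (0:ℝ)..1, (deriv (O t) τ - h * (k - O t τ)) ^ 2 =
      (∫ τ in (0:ℝ)..1, (deriv (O t) τ + h * O t τ) ^ 2)
        - 2 * (h * k) * ((O t 1 - O t 0) + h * ∫ τ in (0:ℝ)..1, O t τ) + (h * k) ^ 2 := by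
    intro t
    have hu : Continuous fun τ => deriv (O t) τ + h * O t τ :=
      ((hO t).continuous_deriv le_rfl).add ((hO t).continuous.const_mul h)
    have hintegrand : (fun τ => (deriv (O t) τ - h * (k - O t τ)) ^ 2) =
        fun τ => (deriv (O t) τ + h * O t τ - h * k) ^ 2 := by
      funext τ; ring
    rw [hintegrand, integral_sub_const_sq (hu.intervalIntegrable _ _)
      ((hu.pow 2).intervalIntegrable _ _), integral_deriv_add_const_mul (hO t)]
    ring
  simp only [hterm, Finset.mul_sum, Finset.sum_mul, ← Finset.sum_sub_distrib,
    ← Finset.sum_add_distrib]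
  refine Finset.sum_congr rfl fun t _ => ?_
  ring

theorem stmt_9_general (T : ℕ) (O : Fin T → ℝ → ℝ) (hO : ∀ t, ContDiff ℝ 1 (O t))
    (w : Fin T → ℝ) (hpos : 0 < ∑ t, w t)
    (h : ℝ) (hh : 0 < h) :
    let g : ℝ → ℝ := fun k =>
      ∑ t, w t * ∫ τ in (0:ℝ)..1, (deriv (O t) τ - h * (k - O t τ)) ^ 2
    let kstar : ℝ :=
      (∑ t, w t * ((O t 1 - O t 0) + h * ∫ τ in (0:ℝ)..1, O t τ)) / (h * ∑ t, w t)
    (∀ k, g kstar ≤ g k) ∧ (∀ k, g k = g kstar ↔ k = kstar) := by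
  intro g kstar
  set S := ∑ t, w t
  set B := ∑ t, w t * ((O t 1 - O t 0) + h * ∫ τ in (0:ℝ)..1, O t τ)
  have hg : g = fun k => (h ^ 2 * S) * k ^ 2 - 2 * (h * B) * k
      + ∑ t, w t * ∫ τ in (0:ℝ)..1, (deriv (O t) τ + h * O t τ) ^ 2 :=
    funext (weighted_objective_eq_quadratic O hO w h)
  have hkstar : kstar = h * B / (h ^ 2 * S) := by
    rw [pow_two, mul_assoc, mul_div_mul_left B (h * S) hh.ne']
  rw [hkstar, hg]
  exact quadratic_vertex_isMinimizer (by positivity)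

/-- Reestimation of the Ornstein–Uhlenbeck mean parameter with concentration `h`
held fixed: `k ↦ ∑ w t * ∫₀¹ (O t'(τ) − h(k − O t τ))² dτ` has the unique global
minimizer `k* = ∑ w t [(O t 1 − O t 0) + h ∫₀¹ O t] / (h ∑ w t)`. -/
theorem stmt_9 (T : ℕ) (O : Fin T → ℝ → ℝ) (hO : ∀ t, ContDiff ℝ 1 (O t))
    (w : Fin T → ℝ) (hw : ∀ t, 0 ≤ w t) (hpos : 0 < ∑ t, w t)
    (h : ℝ) (hh : 0 < h) :
    let g : ℝ → ℝ := fun k =>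
      ∑ t, w t * ∫ τ in (0:ℝ)..1, (deriv (O t) τ - h * (k - O t τ)) ^ 2
    let kstar : ℝ :=
      (∑ t, w t * ((O t 1 - O t 0) + h * ∫ τ in (0:ℝ)..1, O t τ)) / (h * ∑ t, w t)
    (∀ k, g kstar ≤ g k) ∧ (∀ k, g k = g kstar ↔ k = kstar) :=
  stmt_9_general T O hO w hpos h hh
end

section
/- Let O_1, …, O_T : [0,1] → ℝ be continuously differentiable functions, let w_1, …, w_T be nonnegative reals with ∑_{t=1}^T w_t > 0, and fix k ∈ ℝ. Assume D = ∑_{t=1}^T w_t ∫_0^1 (k − O_t(τ))² dτ > 0. Then the function u(h) = ∑_{t=1}^T w_t { ½ ∫_0^1 (O_t'(τ) − h(k − O_t(τ)))² dτ − h/2 } on ℝ has a unique global minimizer, namely h* = (∑_{t=1}^T w_t [ ½ + k(O_t(1) − O_t(0)) − ∫_0^1 O_t'(τ) O_t(τ) dτ ]) / D. -/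
/-!
Expanding the square, each summand of `u` is a quadratic polynomial in `h`; the leading
coefficients add up to `D / 2 > 0` and, after `∫₀¹ O'(k − O) = k (O 1 − O 0) − ∫₀¹ O' O`
(fundamental theorem of calculus), the linear coefficients add up to minus the numerator of
`h*`. A quadratic with positive leading coefficient has its vertex as unique global minimizer.
-/

open intervalIntegral MeasureTheory

theorem quadratic_vertex_isMin_unique {A B C : ℝ} (hA : 0 < A) :
    let f : ℝ → ℝ := fun x => A / 2 * x ^ 2 - B * x + C
    (∀ x, f (B / A) ≤ f x) ∧ (∀ x, f x = f (B / A) ↔ x = B / A) := by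
  intro f
  have hf : ∀ x, f x - f (B / A) = A / 2 * (x - B / A) ^ 2 := fun x => by
    simp only [f]
    field_simp
    ring
  refine ⟨fun x => ?_, fun x => ?_⟩
  · nlinarith [hf x, sq_nonneg (x - B / A)]
  · rw [← sub_eq_zero, hf, mul_eq_zero, pow_eq_zero_iff two_ne_zero, sub_eq_zero]
    simp [hA.ne']

theorem Finset.sum_mul_quadratic {ι : Type*} (s : Finset ι) (w a b c : ι → ℝ) (x : ℝ) :
    ∑ i ∈ s, w i * (a i / 2 * x ^ 2 - b i * x + c i)
      = (∑ i ∈ s, w i * a i) / 2 * x ^ 2 - (∑ i ∈ s, w i * b i) * x + ∑ i ∈ s, w i * c i := by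
  simp only [Finset.sum_div, Finset.sum_mul, ← Finset.sum_sub_distrib, ← Finset.sum_add_distrib]
  exact Finset.sum_congr rfl fun i _ => by ring

theorem intervalIntegral.integral_sub_mul_sq {f g : ℝ → ℝ} (hf : Continuous f)
    (hg : Continuous g) (a b h : ℝ) :
    ∫ x in a..b, (f x - h * g x) ^ 2
      = (∫ x in a..b, f x ^ 2) - 2 * h * (∫ x in a..b, f x * g x)
        + h ^ 2 * ∫ x in a..b, g x ^ 2 := by
  have hff : IntervalIntegrable (fun x => f x ^ 2) volume a b := (hf.pow 2).intervalIntegrable a b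
  have hfg : IntervalIntegrable (fun x => f x * g x) volume a b :=
    (hf.mul hg).intervalIntegrable a b
  have hgg : IntervalIntegrable (fun x => g x ^ 2) volume a b := (hg.pow 2).intervalIntegrable a b
  rw [← integral_const_mul, ← integral_const_mul, ← integral_sub hff (hfg.const_mul _),
    ← integral_add (hff.sub (hfg.const_mul _)) (hgg.const_mul _)]
  exact integral_congr fun x _ => by ring

theorem intervalIntegral.integral_deriv_mul_const_sub {f : ℝ → ℝ} (hf : ContDiff ℝ 1 f)
    (a b k : ℝ) :
    ∫ x in a..b, deriv f x * (k - f x) = k * (f b - f a) - ∫ x in a..b, deriv f x * f x := by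
  have hf' : Continuous (deriv f) := hf.continuous_deriv le_rfl
  have ftc : ∫ x in a..b, deriv f x = f b - f a :=
    integral_deriv_eq_sub (fun x _ => hf.differentiable one_ne_zero x) (hf'.intervalIntegrable a b)
  have hff' : IntervalIntegrable (fun x => deriv f x * f x) volume a b :=
    (hf'.mul hf.continuous).intervalIntegrable a b
  rw [← ftc, ← integral_const_mul, ← integral_sub ((hf'.intervalIntegrable a b).const_mul k) hff']
  exact integral_congr fun x _ => by ring

theorem ou_action_eq_quadratic {O : ℝ → ℝ} (hO : ContDiff ℝ 1 O) (k h : ℝ) :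
    1 / 2 * (∫ τ in (0:ℝ)..1, (deriv O τ - h * (k - O τ)) ^ 2) - h / 2
      = (∫ τ in (0:ℝ)..1, (k - O τ) ^ 2) / 2 * h ^ 2
        - (1 / 2 + k * (O 1 - O 0) - ∫ τ in (0:ℝ)..1, deriv O τ * O τ) * h
        + 1 / 2 * ∫ τ in (0:ℝ)..1, deriv O τ ^ 2 := by
  rw [integral_sub_mul_sq (g := fun τ => k - O τ) (hO.continuous_deriv le_rfl)
    (continuous_const.sub hO.continuous),
    integral_deriv_mul_const_sub hO]
  ring

theorem stmt_10_general (T : ℕ) (O : Fin T → ℝ → ℝ) (hO : ∀ t, ContDiff ℝ 1 (O t))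
    (w : Fin T → ℝ) (k : ℝ)
    (hD : 0 < ∑ t, w t * ∫ τ in (0:ℝ)..1, (k - O t τ) ^ 2) :
    let u : ℝ → ℝ := fun h => ∑ t, w t *
      ((1 / 2) * (∫ τ in (0:ℝ)..1, (deriv (O t) τ - h * (k - O t τ)) ^ 2) - h / 2)
    let hstar : ℝ :=
      (∑ t, w t * (1 / 2 + k * (O t 1 - O t 0) - ∫ τ in (0:ℝ)..1, deriv (O t) τ * O t τ))
        / (∑ t, w t * ∫ τ in (0:ℝ)..1, (k - O t τ) ^ 2)
    (∀ h, u hstar ≤ u h) ∧ (∀ h, u h = u hstar ↔ h = hstar) := by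
  intro u hstar
  have hu : u = fun h => (∑ t, w t * ∫ τ in (0:ℝ)..1, (k - O t τ) ^ 2) / 2 * h ^ 2
      - (∑ t, w t * (1 / 2 + k * (O t 1 - O t 0) - ∫ τ in (0:ℝ)..1, deriv (O t) τ * O t τ)) * h
      + ∑ t, w t * (1 / 2 * ∫ τ in (0:ℝ)..1, deriv (O t) τ ^ 2) := by
    funext h
    simp only [u, ou_action_eq_quadratic (hO _), Finset.sum_mul_quadratic]
  rw [hu]
  exact quadratic_vertex_isMin_unique hD

/-- Reestimation of the Ornstein–Uhlenbeck concentration parameter with mean `k`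
held fixed: assuming `D = ∑ w t ∫₀¹ (k − O t τ)² dτ > 0`, the function
`u(h) = ∑ w t {½∫₀¹ (O t'(τ) − h(k − O t τ))² dτ − h/2}` has the unique global
minimizer `h* = ∑ w t [½ + k(O t 1 − O t 0) − ∫₀¹ O t' O t] / D`. -/
theorem stmt_10 (T : ℕ) (O : Fin T → ℝ → ℝ) (hO : ∀ t, ContDiff ℝ 1 (O t))
    (w : Fin T → ℝ) (hw : ∀ t, 0 ≤ w t) (hpos : 0 < ∑ t, w t) (k : ℝ)
    (hD : 0 < ∑ t, w t * ∫ τ in (0:ℝ)..1, (k - O t τ) ^ 2) :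
    let u : ℝ → ℝ := fun h => ∑ t, w t *
      ((1 / 2) * (∫ τ in (0:ℝ)..1, (deriv (O t) τ - h * (k - O t τ)) ^ 2) - h / 2)
    let hstar : ℝ :=
      (∑ t, w t * (1 / 2 + k * (O t 1 - O t 0) - ∫ τ in (0:ℝ)..1, deriv (O t) τ * O t τ))
        / (∑ t, w t * ∫ τ in (0:ℝ)..1, (k - O t τ) ^ 2)
    (∀ h, u hstar ≤ u h) ∧ (∀ h, u h = u hstar ↔ h = hstar) :=
  stmt_10_general T O hO w k hD
end

section
/- Let 0 < ω < 1/2, let f_1, …, f_T : [0,1] → ℝ be continuous, let w_1, …, w_T be nonnegative reals with ∑_{t=1}^T w_t > 0, and set b = (1−2ω) Γ(1−ω)/Γ(2−2ω). Then the function h ↦ ∑_{t=1}^T w_t ∫_0^1 (f_t(τ) − h · b · τ^{−ω})² dτ on ℝ has a unique global minimizer, namely h* = (Γ(2−2ω)/Γ(1−ω)) · (∑_{t=1}^T w_t ∫_0^1 τ^{−ω} f_t(τ) dτ) / (∑_{t=1}^T w_t), where Γ is the Gamma function. -/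
/-!
Each path contributes `∫ f² − 2hb ∫ τ^{−ω} f + (hb)² ∫ τ^{−2ω}`, and `∫₀¹ τ^{−2ω} dτ = 1/(1−2ω)` is
finite because `2ω < 1`. Hence the objective is a quadratic in `h` with leading coefficient
`b² (∑ w) / (1−2ω) > 0`; completing the square gives the unique minimizer, and
`(1−2ω)/b = Γ(2−2ω)/Γ(1−ω)` turns the vertex into the stated formula.
-/

open MeasureTheory Set

lemma eq_add_mul_sq_of_eq_quadratic {g : ℝ → ℝ} {A B C : ℝ} (hC : C ≠ 0)
    (hg : ∀ x, g x = A - 2 * B * x + C * x ^ 2) (x : ℝ) :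
    g x = g (B / C) + C * (x - B / C) ^ 2 := by
  rw [hg, hg]
  field_simp
  ring

lemma unique_min_of_eq_quadratic {g : ℝ → ℝ} {A B C : ℝ} (hC : 0 < C)
    (hg : ∀ x, g x = A - 2 * B * x + C * x ^ 2) :
    (∀ x, g (B / C) ≤ g x) ∧ (∀ x, g x = g (B / C) ↔ x = B / C) := by
  have hsq := eq_add_mul_sq_of_eq_quadratic hC.ne' hg
  refine ⟨fun x => ?_, fun x => ?_⟩
  · rw [hsq x]
    have := mul_nonneg hC.le (sq_nonneg (x - B / C))
    linarith
  · rw [hsq x, add_eq_left, mul_eq_zero, pow_eq_zero_iff two_ne_zero, sub_eq_zero]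
    simp [hC.ne']

lemma intervalIntegral_sub_mul_sq {f p : ℝ → ℝ} {a b : ℝ} {μ : Measure ℝ}
    (hf : IntervalIntegrable (fun x => f x ^ 2) μ a b)
    (hpf : IntervalIntegrable (fun x => p x * f x) μ a b)
    (hp : IntervalIntegrable (fun x => p x ^ 2) μ a b) (c : ℝ) :
    ∫ x in a..b, (f x - c * p x) ^ 2 ∂μ =
      (∫ x in a..b, f x ^ 2 ∂μ) - 2 * c * (∫ x in a..b, p x * f x ∂μ)
        + c ^ 2 * ∫ x in a..b, p x ^ 2 ∂μ := by
  have hexpand : (fun x => (f x - c * p x) ^ 2) =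
      fun x => f x ^ 2 - (2 * c) * (p x * f x) + c ^ 2 * p x ^ 2 := by
    funext x
    ring
  rw [hexpand, intervalIntegral.integral_add (hf.sub (hpf.const_mul _)) (hp.const_mul _),
    intervalIntegral.integral_sub hf (hpf.const_mul _), intervalIntegral.integral_const_mul,
    intervalIntegral.integral_const_mul]

lemma sum_mul_intervalIntegral_sub_mul_sq {ι : Type*} (s : Finset ι) (w : ι → ℝ)
    {f : ι → ℝ → ℝ} {p : ℝ → ℝ} {a b : ℝ} {μ : Measure ℝ}
    (hf : ∀ i, IntervalIntegrable (fun x => f i x ^ 2) μ a b)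
    (hpf : ∀ i, IntervalIntegrable (fun x => p x * f i x) μ a b)
    (hp : IntervalIntegrable (fun x => p x ^ 2) μ a b) (c : ℝ) :
    ∑ i ∈ s, w i * ∫ x in a..b, (f i x - c * p x) ^ 2 ∂μ =
      (∑ i ∈ s, w i * ∫ x in a..b, f i x ^ 2 ∂μ)
        - 2 * c * (∑ i ∈ s, w i * ∫ x in a..b, p x * f i x ∂μ)
        + c ^ 2 * ((∑ i ∈ s, w i) * ∫ x in a..b, p x ^ 2 ∂μ) := by
  simp only [intervalIntegral_sub_mul_sq (hf _) (hpf _) hp, Finset.mul_sum, Finset.sum_mul,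
    ← Finset.sum_sub_distrib, ← Finset.sum_add_distrib]
  exact Finset.sum_congr rfl fun i _ => by ring

lemma rpow_two_mul_eqOn_Ici (s : ℝ) :
    EqOn (fun x : ℝ => x ^ (2 * s)) (fun x => (x ^ s) ^ 2) (Ici 0) := fun x hx => by
  simp only
  rw [mul_comm, ← Real.rpow_mul_natCast hx]
  norm_num

lemma intervalIntegrable_rpow_sq_zero_one {s : ℝ} (hs : -1 / 2 < s) :
    IntervalIntegrable (fun x : ℝ => (x ^ s) ^ 2) volume 0 1 :=
  (intervalIntegral.intervalIntegrable_rpow' (r := 2 * s) (by linarith)).congr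
    ((rpow_two_mul_eqOn_Ici s).mono fun _ hx => le_of_lt (by simpa using hx.1))

lemma integral_rpow_sq_zero_one {s : ℝ} (hs : -1 / 2 < s) :
    ∫ x in (0 : ℝ)..1, (x ^ s) ^ 2 = 1 / (2 * s + 1) := by
  rw [← intervalIntegral.integral_congr ((rpow_two_mul_eqOn_Ici s).mono
      fun _ hx => (by simpa using hx.1 : (0 : ℝ) ≤ _)),
    integral_rpow (Or.inl (by linarith)), Real.one_rpow, Real.zero_rpow (by linarith)]
  ring

theorem stmt_14_general (ω : ℝ) (hω' : ω < 1 / 2)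
    (T : ℕ) (f : Fin T → ℝ → ℝ) (hf : ∀ t, Continuous (f t))
    (w : Fin T → ℝ) (hpos : 0 < ∑ t, w t) :
    let b : ℝ := (1 - 2 * ω) * Real.Gamma (1 - ω) / Real.Gamma (2 - 2 * ω)
    let g : ℝ → ℝ := fun h =>
      ∑ t, w t * ∫ τ in (0:ℝ)..1, (f t τ - h * b * τ ^ (-ω)) ^ 2
    let hstar : ℝ := (Real.Gamma (2 - 2 * ω) / Real.Gamma (1 - ω)) *
      (∑ t, w t * ∫ τ in (0:ℝ)..1, τ ^ (-ω) * f t τ) / (∑ t, w t)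
    (∀ h, g hstar ≤ g h) ∧ (∀ h, g h = g hstar ↔ h = hstar) := by
  intro b g hstar
  have hs : -1 / 2 < -ω := by linarith
  have h₁ : 0 < 1 - 2 * ω := by linarith
  have hΓ₁ : 0 < Real.Gamma (1 - ω) := Real.Gamma_pos_of_pos (by linarith)
  have hΓ₂ : 0 < Real.Gamma (2 - 2 * ω) := Real.Gamma_pos_of_pos (by linarith)
  have hb : 0 < b := div_pos (mul_pos h₁ hΓ₁) hΓ₂
  have hg (h : ℝ) : g h = (∑ t, w t * ∫ τ in (0:ℝ)..1, f t τ ^ 2)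
      - 2 * (b * ∑ t, w t * ∫ τ in (0:ℝ)..1, τ ^ (-ω) * f t τ) * h
      + (b ^ 2 * ((∑ t, w t) * (1 / (1 - 2 * ω)))) * h ^ 2 := by
    have := sum_mul_intervalIntegral_sub_mul_sq Finset.univ w
      (fun t => ((hf t).pow 2).intervalIntegrable 0 1)
      (fun t => (intervalIntegral.intervalIntegrable_rpow' (by linarith)).mul_continuousOn
        (hf t).continuousOn)
      (intervalIntegrable_rpow_sq_zero_one hs) (h * b)
    rw [integral_rpow_sq_zero_one hs, show 2 * -ω + 1 = 1 - 2 * ω by ring] at this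
    simp only [g, this]
    ring
  have hvertex : hstar = (b * ∑ t, w t * ∫ τ in (0:ℝ)..1, τ ^ (-ω) * f t τ) /
      (b ^ 2 * ((∑ t, w t) * (1 / (1 - 2 * ω)))) := by
    simp only [hstar, b]
    field_simp [h₁.ne']
  rw [hvertex]
  exact unique_min_of_eq_quadratic
    (mul_pos (pow_pos hb 2) (mul_pos hpos (one_div_pos.mpr h₁))) hg

/-- Drift reestimation for fractional Brownian motion, regular case
(`0 < ω < 1/2`, `b = (1−2ω)Γ(1−ω)/Γ(2−2ω)`): the objective
`h ↦ ∑ w t ∫₀¹ (f t τ − h b τ^{−ω})² dτ` has the unique global minimizer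
`h* = (Γ(2−2ω)/Γ(1−ω)) (∑ w t ∫₀¹ τ^{−ω} f t τ dτ) / (∑ w t)`. -/
theorem stmt_14 (ω : ℝ) (hω : 0 < ω) (hω' : ω < 1 / 2)
    (T : ℕ) (f : Fin T → ℝ → ℝ) (hf : ∀ t, Continuous (f t))
    (w : Fin T → ℝ) (hw : ∀ t, 0 ≤ w t) (hpos : 0 < ∑ t, w t) :
    let b : ℝ := (1 - 2 * ω) * Real.Gamma (1 - ω) / Real.Gamma (2 - 2 * ω)
    let g : ℝ → ℝ := fun h =>
      ∑ t, w t * ∫ τ in (0:ℝ)..1, (f t τ - h * b * τ ^ (-ω)) ^ 2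
    let hstar : ℝ := (Real.Gamma (2 - 2 * ω) / Real.Gamma (1 - ω)) *
      (∑ t, w t * ∫ τ in (0:ℝ)..1, τ ^ (-ω) * f t τ) / (∑ t, w t)
    (∀ h, g hstar ≤ g h) ∧ (∀ h, g h = g hstar ↔ h = hstar) :=
  stmt_14_general ω hω' T f hf w hpos
end
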